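/- Let 𝔪 : T(T⁺V) → T(T⁺V) be the coalgebra homomorphism on the cofree-type tensor coalgebra over the positive tensor algebra T⁺V of a graded module V, whose k-th component is the iterated multiplication μ^{(k)} : (T⁺V)^{⊗k} → T⁺V, and let 𝔪⁻ be the coalgebra homomorphism with components (-1)^{k-1} μ^{(k)}. Then 𝔪 ∘ 𝔪⁻ = id and 𝔪⁻ ∘ 𝔪 = id. -/
import Mathlib

lemma memE (n : ℕ) (d : CompositionAsSet n) (i : Fin (n-1)) (h : 1 + (i:ℕ) < n + 1) :
    i ∈ compositionAsSetEquiv n d ↔ (⟨1 + i, h⟩ : Fin n.succ) ∈ d.boundaries := by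
  simp [compositionAsSetEquiv]

lemma card_compositionAsSetEquiv (n : ℕ) (hn : 0 < n) (d : CompositionAsSet n) :
    (compositionAsSetEquiv n d).card + 2 = d.boundaries.card := by
  classical
  have h0 : (0 : Fin n.succ) ∈ d.boundaries := d.zero_mem
  have hl : Fin.last n ∈ d.boundaries := d.getLast_mem
  have hne : (0 : Fin n.succ) ≠ Fin.last n := by
    intro h
    have : ((0 : Fin n.succ) : ℕ) = ((Fin.last n : Fin n.succ) : ℕ) := by rw [h]
    simp at this; omega
  have hsub : ({0, Fin.last n} : Finset (Fin n.succ)) ⊆ d.boundaries := by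
    intro x hx
    simp only [Finset.mem_insert, Finset.mem_singleton] at hx
    rcases hx with rfl | rfl <;> assumption
  have hcard2 : ({0, Fin.last n} : Finset (Fin n.succ)).card = 2 := by
    rw [Finset.card_insert_of_notMem (by simp [hne]), Finset.card_singleton]
  have hbij : (compositionAsSetEquiv n d).card = (d.boundaries \ {0, Fin.last n}).card := by
    apply Finset.card_bij (fun (i : Fin (n-1)) _ => (⟨1 + i, by have := i.isLt; omega⟩ : Fin n.succ))
    · intro i hi
      rw [memE n d i (by have := i.isLt; omega)] at hi
      simp only [Finset.mem_sdiff, Finset.mem_insert, Finset.mem_singleton]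
      refine ⟨hi, ?_⟩
      have := i.isLt
      push_neg
      constructor <;>
        · intro h
          have := congrArg (Fin.val) h
          simp only [Fin.val_zero, Fin.val_last] at this
          omega
    · intro i _ j _ hij
      simp only [Fin.mk.injEq, Fin.ext_iff] at hij ⊢
      omega
    · intro x hx
      simp only [Finset.mem_sdiff, Finset.mem_insert, Finset.mem_singleton] at hx
      obtain ⟨hxb, hx0⟩ := hx
      push_neg at hx0
      have hx0' : (x : ℕ) ≠ 0 := fun h => hx0.1 (Fin.ext h)
      have hxl : (x : ℕ) ≠ n := fun h => hx0.2 (by simp [Fin.ext_iff, h])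
      have hxlt : (x : ℕ) < n + 1 := x.isLt
      refine ⟨⟨(x : ℕ) - 1, by omega⟩, ?_, ?_⟩
      · rw [memE n d _ (by simp; omega)]
        convert hxb using 1
        simp only [Fin.ext_iff]
        simp
        omega
      · simp only [Fin.ext_iff]
        simp
        omega
  have hs := Finset.card_sdiff_of_subset hsub
  rw [hcard2] at hs
  have hle : 2 ≤ d.boundaries.card := hcard2 ▸ Finset.card_le_card hsub
  omega

private def myE (n : ℕ) : Composition n ≃ Finset (Fin (n - 1)) :=
  (compositionEquiv n).trans (compositionAsSetEquiv n)

lemma length_eq_card (n : ℕ) (hn : 0 < n) (c : Composition n) :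
    c.length = (myE n c).card + 1 := by
  have h := card_compositionAsSetEquiv n hn c.toCompositionAsSet
  have h2 : c.toCompositionAsSet.boundaries.card = c.toCompositionAsSet.length + 1 :=
    c.toCompositionAsSet.card_boundaries_eq_succ_length
  rw [c.toCompositionAsSet_length] at h2
  have : myE n c = compositionAsSetEquiv n c.toCompositionAsSet := rfl
  rw [this]
  omega

lemma mySignSum (n : ℕ) (hn : 0 < n) :
    ∑ c : Composition n, (-1 : ℤ) ^ (c.length - 1) = if n = 1 then 1 else 0 := by
  classical
  rw [← Equiv.sum_comp (myE n).symm (fun c : Composition n => (-1 : ℤ) ^ (c.length - 1))]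
  have key : ∀ s : Finset (Fin (n-1)), ((myE n).symm s).length - 1 = s.card := by
    intro s
    have := length_eq_card n hn ((myE n).symm s)
    rw [(myE n).apply_symm_apply s] at this
    omega
  simp only [key]
  rw [← Finset.powerset_univ, Finset.sum_powerset_neg_one_pow_card]
  rcases eq_or_ne n 1 with h | h
  · subst h; simp
  · have : Nonempty (Fin (n-1)) := ⟨⟨0, by omega⟩⟩
    rw [if_neg (by simp [Finset.univ_eq_empty_iff]), if_neg h]



/-- The coalgebra endomorphisms `𝔪` and `𝔪⁻` of `T(T⁺V)`, whose `k`-th components are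
`μ^{(k)}` and `(-1)^{k-1} μ^{(k)}` respectively (iterated multiplication in the tensor
algebra `T⁺V`), are mutually inverse.  Componentwise, the `n`-th component of either
composite `𝔪 ∘ 𝔪⁻` or `𝔪⁻ ∘ 𝔪` is the sum over all compositions `l₁ + ⋯ + l_k = n`
of the corresponding sign times `(μ^{(l₁)} ⊗ ⋯ ⊗ μ^{(l_k)}) ∘ μ^{(k)}`, which, applied to a
word `l` of length `n` in `T⁺V` (modelled here as a list of elements of an associative
multiplication, the iterated product `μ^{(n)}` being `List.prod`), collapses to
`(∑ signs) • μ^{(n)}(l)`.  The claim `𝔪 𝔪⁻ = id = 𝔪⁻ 𝔪` states that this equals the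
identity component for `n = 1` and vanishes for `n > 1`. -/
theorem m_mul_inverse_components (R : Type*) [Ring R] (n : ℕ) (hn : 0 < n)
    (l : List R) (hl : l.length = n) :
    -- the `n`-th component of `𝔪 ∘ 𝔪⁻`, evaluated on the word `l`
    ((∑ c : Composition n,
        ((-1 : ℤ) ^ (c.length - 1)) • ((l.splitWrtComposition c).map List.prod).prod)
      = if n = 1 then l.prod else 0) ∧
    -- the `n`-th component of `𝔪⁻ ∘ 𝔪`, evaluated on the word `l`
    ((∑ c : Composition n,
        ((-1 : ℤ) ^ (n - c.length)) • ((l.splitWrtComposition c).map List.prod).prod)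
      = if n = 1 then l.prod else 0) := by
  subst hl
  set n := l.length with hn'
  have hprod : ∀ c : Composition n, ((l.splitWrtComposition c).map List.prod).prod = l.prod := by
    intro c
    rw [← List.prod_flatten, List.flatten_splitWrtComposition]
  have hkey : ∀ c : Composition n,
      ((-1 : ℤ)) ^ (n - c.length) = (-1) ^ (n - 1) * (-1) ^ (c.length - 1) := by
    intro c
    have h1 := c.length_le
    have h2 := c.length_pos_of_pos hn
    have hmul : (-1 : ℤ) ^ (n - c.length) * (-1) ^ (c.length - 1) = (-1) ^ (n - 1) := by
      rw [← pow_add]; congr 1; omega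
    have hsq : ((-1 : ℤ)) ^ (c.length - 1) * (-1) ^ (c.length - 1) = 1 := by
      rw [← pow_add]; exact Even.neg_one_pow ⟨c.length - 1, rfl⟩
    calc (-1 : ℤ) ^ (n - c.length)
        = (-1 : ℤ) ^ (n - c.length) * ((-1) ^ (c.length - 1) * (-1) ^ (c.length - 1)) := by
          rw [hsq, mul_one]
      _ = ((-1 : ℤ) ^ (n - c.length) * (-1) ^ (c.length - 1)) * (-1) ^ (c.length - 1) := by ring
      _ = (-1) ^ (n - 1) * (-1) ^ (c.length - 1) := by rw [hmul]
  constructor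
  · simp only [hprod, ← Finset.sum_smul, mySignSum n hn]
    split <;> simp
  · simp only [hprod, hkey, mul_smul, ← Finset.smul_sum, ← Finset.sum_smul, mySignSum n hn]
    rcases eq_or_ne n 1 with h | h
    · rw [if_pos h, if_pos h, h]; simp
    · rw [if_neg h, if_neg h]; simp
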